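/- Fix ħ > 0, ε > 0, an integer N ≥ 2, and a > 0, and set V⁺(x) := log|x| for |x| ≥ 1 and V⁺(x) := 0 for |x| < 1. Then for every smooth compactly supported φ_N : (ℝ²)^N → ℂ one has ‖ (1/(Nε)) ∑_{1≤p<q≤N} V⁺(x_p − x_q) φ_N ‖₂² ≤ (a/4) ‖𝒦_N φ_N‖₂² + (64 (N−1)² / (a ε⁴)) ‖φ_N‖₂². -/

import Mathlib

open MeasureTheory Real Filter
open scoped BigOperators ENNReal NNReal

noncomputable section

/-- The plane `ℝ²`. -/
abbrev E2 := EuclideanSpace ℝ (Fin 2)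

/-- The `k`-th component of the vector potential `A(x) = (1/(2ε)) x^⊥`,
where `x^⊥ = (-x₂, x₁)`. -/
def Aco (ε : ℝ) (k : Fin 2) (x : E2) : ℝ :=
  if k = 0 then -(x 1) / (2 * ε) else (x 0) / (2 * ε)

/-- The magnetic momentum operator `-iℏ∂_{x_j^k} + Aᵏ(x_j)` acting on
`N`-body wave functions. -/
def PkN {N : ℕ} (ℏ ε : ℝ) (j : Fin N) (k : Fin 2)
    (φ : (Fin N → E2) → ℂ) (X : Fin N → E2) : ℂ :=
  -Complex.I * (ℏ : ℂ) * fderiv ℝ φ X (Pi.single j (EuclideanSpace.single k 1))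
    + (Aco ε k (X j) : ℂ) * φ X

/-- The `N`-body magnetic kinetic operator
`K_N = (1/2) ∑ⱼ ∑ₖ (-iℏ∂_{x_j^k} + Aᵏ(x_j))²`. -/
def KopN {N : ℕ} (ℏ ε : ℝ) (φ : (Fin N → E2) → ℂ) (X : Fin N → E2) : ℂ :=
  (1 / 2 : ℂ) * ∑ j : Fin N, ∑ k : Fin 2, PkN ℏ ε j k (PkN ℏ ε j k φ) X

/-- The confined `N`-body Hamiltonian `𝒦_N = K_N + (1/2) ∑ⱼ |x_j|²`. -/
def KKopN {N : ℕ} (ℏ ε : ℝ) (φ : (Fin N → E2) → ℂ) (X : Fin N → E2) : ℂ :=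
  KopN ℏ ε φ X + (1 / 2 : ℂ) * ((∑ j : Fin N, ‖X j‖ ^ 2 : ℝ) : ℂ) * φ X

/-- Squared `L²((ℝ²)^N)` norm. -/
def L2sqN {N : ℕ} (f : (Fin N → E2) → ℂ) : ℝ := ∫ X, ‖f X‖ ^ 2
/-- The positive part `V⁺` of `log|x|`. -/
def Vplus (x : E2) : ℝ := if 1 ≤ ‖x‖ then Real.log ‖x‖ else 0

instance : (volume : Measure (Fin N → E2)).IsAddHaarMeasure := ⟨⟩

lemma integrable_cc {f : (Fin N → E2) → ℂ} (hf : Continuous f) (hs : HasCompactSupport f) :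
    Integrable f := hf.integrable_of_hasCompactSupport hs

lemma contDiff_deriv {φ : (Fin N → E2) → ℂ} (hφ : ContDiff ℝ (⊤ : ℕ∞) φ) (v : Fin N → E2) :
    ContDiff ℝ (⊤ : ℕ∞) (fun X => fderiv ℝ φ X v) :=
  (ContinuousLinearMap.apply ℝ ℂ v).contDiff.comp (hφ.fderiv_right (by simp))

lemma hcs_deriv {φ : (Fin N → E2) → ℂ} (hs : HasCompactSupport φ) (v : Fin N → E2) :
    HasCompactSupport (fun X => fderiv ℝ φ X v) :=
  (hs.fderiv ℝ).comp_left (g := fun L : (Fin N → E2) →L[ℝ] ℂ => L v) rfl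

lemma contDiff_Aco (ε : ℝ) (j : Fin N) (k : Fin 2) :
    ContDiff ℝ (⊤ : ℕ∞) (fun X : Fin N → E2 => ((Aco ε k (X j) : ℝ) : ℂ)) := by
  have h : ∀ i : Fin 2, ContDiff ℝ (⊤ : ℕ∞) (fun X : Fin N → E2 => X j i) := fun i =>
    ((EuclideanSpace.proj i).comp (ContinuousLinearMap.proj j) :
      (Fin N → E2) →L[ℝ] ℝ).contDiff
  unfold Aco
  split_ifs
  · exact Complex.ofRealCLM.contDiff.comp (((h 1).neg).div_const _)
  · exact Complex.ofRealCLM.contDiff.comp ((h 0).div_const _)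

lemma fderiv_conj {φ : (Fin N → E2) → ℂ} (hφ : ContDiff ℝ (⊤ : ℕ∞) φ) (X v : Fin N → E2) :
    fderiv ℝ (fun Y => (starRingEnd ℂ) (φ Y)) X v = (starRingEnd ℂ) (fderiv ℝ φ X v) := by
  have h1 : fderiv ℝ (fun Y => Complex.conjCLE (φ Y)) X
      = (Complex.conjCLE : ℂ ≃L[ℝ] ℂ).toContinuousLinearMap.comp (fderiv ℝ φ X) :=
    (Complex.conjCLE.toContinuousLinearMap.hasFDerivAt.comp X
      ((hφ.differentiable (by simp)) X).hasFDerivAt).fderiv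
  have := congrArg (fun L => L v) h1
  simpa using this

lemma contDiff_conj {φ : (Fin N → E2) → ℂ} (hφ : ContDiff ℝ (⊤ : ℕ∞) φ) :
    ContDiff ℝ (⊤ : ℕ∞) (fun Y => (starRingEnd ℂ) (φ Y)) :=
  Complex.conjCLE.toContinuousLinearMap.contDiff.comp hφ

lemma hcs_conj {φ : (Fin N → E2) → ℂ} (hs : HasCompactSupport φ) :
    HasCompactSupport (fun Y => (starRingEnd ℂ) (φ Y)) :=
  hs.comp_left (g := (starRingEnd ℂ)) (by simp)

lemma PkN_symm {f g : (Fin N → E2) → ℂ} (ℏ ε : ℝ) (j : Fin N) (k : Fin 2)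
    (hf : ContDiff ℝ (⊤ : ℕ∞) f) (hfs : HasCompactSupport f)
    (hg : ContDiff ℝ (⊤ : ℕ∞) g) (hgs : HasCompactSupport g) :
    ∫ X, (starRingEnd ℂ) (PkN ℏ ε j k f X) * g X
      = ∫ X, (starRingEnd ℂ) (f X) * PkN ℏ ε j k g X := by
  set v : Fin N → E2 := Pi.single j (EuclideanSpace.single k (1:ℝ)) with hv
  set c : (Fin N → E2) → ℂ := fun X => (starRingEnd ℂ) (f X) with hc
  have hcd : ContDiff ℝ (⊤ : ℕ∞) c := contDiff_conj hf
  have hcs : HasCompactSupport c := hcs_conj hfs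
  have hA := contDiff_Aco (N := N) ε j k
  have i1 : Integrable (fun X => fderiv ℝ c X v * g X) :=
    integrable_cc ((contDiff_deriv hcd v).continuous.mul hg.continuous) hgs.mul_left
  have i2 : Integrable (fun X => c X * fderiv ℝ g X v) :=
    integrable_cc (hcd.continuous.mul (contDiff_deriv hg v).continuous)
      ((hcs_deriv hgs v).mul_left)
  have i3 : Integrable (fun X => c X * g X) :=
    integrable_cc (hcd.continuous.mul hg.continuous) hgs.mul_left
  have key : ∫ X, c X * fderiv ℝ g X v = - ∫ X, fderiv ℝ c X v * g X :=
    integral_mul_fderiv_eq_neg_fderiv_mul_of_integrable i1 i2 i3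
      (fun x _ => hcd.differentiable (by simp) x) (fun x _ => hg.differentiable (by simp) x)
  have i4 : Integrable (fun X => ((Aco ε k (X j) : ℝ) : ℂ) * (c X * g X)) :=
    integrable_cc (hA.continuous.mul (hcd.continuous.mul hg.continuous))
      (hgs.mul_left.mul_left)
  have e1 : ∀ X, (starRingEnd ℂ) (PkN ℏ ε j k f X) * g X
      = Complex.I * (ℏ : ℂ) * (fderiv ℝ c X v * g X)
        + ((Aco ε k (X j) : ℝ) : ℂ) * (c X * g X) := by
    intro X
    have h2 : fderiv ℝ c X v = (starRingEnd ℂ) (fderiv ℝ f X v) := by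
      rw [hc]; exact fderiv_conj hf X v
    simp only [PkN, map_add, map_mul, map_neg, Complex.conj_I, Complex.conj_ofReal, hc, h2, hv]
    rw [fderiv_conj hf X]
    ring
  have e2 : ∀ X, (starRingEnd ℂ) (f X) * PkN ℏ ε j k g X
      = -Complex.I * (ℏ : ℂ) * (c X * fderiv ℝ g X v)
        + ((Aco ε k (X j) : ℝ) : ℂ) * (c X * g X) := by
    intro X; simp only [PkN, hc, hv]; ring
  simp only [e1, e2]
  rw [integral_add (i1.const_mul _) i4, integral_add (i2.const_mul _) i4,
    MeasureTheory.integral_const_mul, MeasureTheory.integral_const_mul, key]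
  ring

lemma PkN_contDiff {f : (Fin N → E2) → ℂ} (ℏ ε : ℝ) (j : Fin N) (k : Fin 2)
    (hφ : ContDiff ℝ (⊤ : ℕ∞) f) : ContDiff ℝ (⊤ : ℕ∞) (PkN ℏ ε j k f) := by
  unfold PkN
  exact (contDiff_const.mul (contDiff_deriv hφ _)).add ((contDiff_Aco ε j k).mul hφ)

lemma PkN_hcs {f : (Fin N → E2) → ℂ} (ℏ ε : ℝ) (j : Fin N) (k : Fin 2)
    (hs : HasCompactSupport f) : HasCompactSupport (PkN ℏ ε j k f) := by
  unfold PkN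
  exact ((hcs_deriv hs _).mul_left).add (hs.mul_left)

variable {φ : (Fin N → E2) → ℂ}

lemma hcs_sum {ι : Type*} (s : Finset ι) (f : ι → (Fin N → E2) → ℂ)
    (h : ∀ i ∈ s, HasCompactSupport (f i)) :
    HasCompactSupport (fun X => ∑ i ∈ s, f i X) := by
  classical
  induction s using Finset.induction_on with
  | empty => simp [HasCompactSupport, tsupport]
  | insert a t hnot ih =>
      simp only [Finset.sum_insert hnot]
      exact (h a (Finset.mem_insert_self a t)).add
        (ih fun i hi => h i (Finset.mem_insert_of_mem hi))

variable {φ : (Fin N → E2) → ℂ}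

lemma KopN_contDiff (ℏ ε : ℝ) (hφ : ContDiff ℝ (⊤ : ℕ∞) φ) : Continuous (KopN ℏ ε φ) := by
  unfold KopN
  exact continuous_const.mul (continuous_finset_sum _ fun j _ =>
    continuous_finset_sum _ fun k _ =>
      (PkN_contDiff ℏ ε j k (PkN_contDiff ℏ ε j k hφ)).continuous)

lemma KopN_hcs (ℏ ε : ℝ) (hs : HasCompactSupport φ) : HasCompactSupport (KopN ℏ ε φ) := by
  unfold KopN
  exact HasCompactSupport.mul_left <| hcs_sum _ _ fun j _ =>
    hcs_sum _ _ fun k _ => (PkN_hcs ℏ ε j k (PkN_hcs ℏ ε j k hs))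

lemma contW : Continuous (fun X : Fin N → E2 => ∑ j, ‖X j‖ ^ 2) :=
  continuous_finset_sum _ fun j _ => ((continuous_apply j).norm.pow 2)

lemma KKopN_cont (ℏ ε : ℝ) (hφ : ContDiff ℝ (⊤ : ℕ∞) φ) : Continuous (KKopN ℏ ε φ) := by
  unfold KKopN
  exact (KopN_contDiff ℏ ε hφ).add
    ((continuous_const.mul (Complex.continuous_ofReal.comp contW)).mul hφ.continuous)

lemma KKopN_hcs (ℏ ε : ℝ) (hs : HasCompactSupport φ) : HasCompactSupport (KKopN ℏ ε φ) := by
  unfold KKopN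
  exact (KopN_hcs ℏ ε hs).add hs.mul_left

lemma conj_mul_self (z : ℂ) : (starRingEnd ℂ) z * z = ((‖z‖ ^ 2 : ℝ) : ℂ) := by
  rw [← Complex.normSq_eq_conj_mul_self]
  norm_cast
  rw [Complex.normSq_eq_norm_sq]

lemma pairing_sq (ℏ ε : ℝ) (j : Fin N) (k : Fin 2)
    (hφ : ContDiff ℝ (⊤ : ℕ∞) φ) (hs : HasCompactSupport φ) :
    ∫ X, (starRingEnd ℂ) (φ X) * PkN ℏ ε j k (PkN ℏ ε j k φ) X
      = ((∫ X, ‖PkN ℏ ε j k φ X‖ ^ 2 : ℝ) : ℂ) := by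
  rw [← PkN_symm ℏ ε j k hφ hs (PkN_contDiff ℏ ε j k hφ) (PkN_hcs ℏ ε j k hs)]
  simp only [conj_mul_self]
  exact integral_ofReal

lemma Kop_pairing_nonneg (ℏ ε : ℝ) (hφ : ContDiff ℝ (⊤ : ℕ∞) φ) (hs : HasCompactSupport φ) :
    0 ≤ (∫ X, (starRingEnd ℂ) (φ X) * KopN ℏ ε φ X).re := by
  have e : ∀ X, (starRingEnd ℂ) (φ X) * KopN ℏ ε φ X
      = (1 / 2 : ℂ) * ∑ j : Fin N, ∑ k : Fin 2,
          ((starRingEnd ℂ) (φ X) * PkN ℏ ε j k (PkN ℏ ε j k φ) X) := by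
    intro X
    rw [KopN]
    rw [show (starRingEnd ℂ) (φ X) * ((1/2 : ℂ) * ∑ j : Fin N, ∑ k : Fin 2,
        PkN ℏ ε j k (PkN ℏ ε j k φ) X)
      = (1/2 : ℂ) * ((starRingEnd ℂ) (φ X) * ∑ j : Fin N, ∑ k : Fin 2,
        PkN ℏ ε j k (PkN ℏ ε j k φ) X) from by ring]
    congr 1
    rw [Finset.mul_sum]
    exact Finset.sum_congr rfl fun j _ => Finset.mul_sum _ _ _
  have iint : ∀ (j : Fin N) (k : Fin 2),
      Integrable (fun X => (starRingEnd ℂ) (φ X) * PkN ℏ ε j k (PkN ℏ ε j k φ) X) := by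
    intro j k
    refine integrable_cc (Continuous.mul ?_ ?_) ?_
    · exact Complex.continuous_conj.comp hφ.continuous
    · exact (PkN_contDiff ℏ ε j k (PkN_contDiff ℏ ε j k hφ)).continuous
    · exact HasCompactSupport.mul_left (PkN_hcs ℏ ε j k (PkN_hcs ℏ ε j k hs))
  simp only [e]
  rw [MeasureTheory.integral_const_mul,
    integral_finset_sum _ (fun j _ => integrable_finset_sum _ (fun k _ => iint j k))]
  have : ∀ j : Fin N, ∫ X, ∑ k : Fin 2,
      ((starRingEnd ℂ) (φ X) * PkN ℏ ε j k (PkN ℏ ε j k φ) X)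
      = ∑ k : Fin 2, ((∫ X, ‖PkN ℏ ε j k φ X‖ ^ 2 : ℝ) : ℂ) := by
    intro j
    rw [integral_finset_sum _ (fun k _ => iint j k)]
    exact Finset.sum_congr rfl fun k _ => pairing_sq ℏ ε j k hφ hs
  simp only [this]
  have : (∑ j : Fin N, ∑ k : Fin 2, ((∫ X, ‖PkN ℏ ε j k φ X‖ ^ 2 : ℝ) : ℂ))
      = ((∑ j : Fin N, ∑ k : Fin 2, (∫ X, ‖PkN ℏ ε j k φ X‖ ^ 2 : ℝ) : ℝ) : ℂ) := by
    push_cast; ring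
  rw [this]
  rw [show ((1:ℂ)/2 * ((∑ j : Fin N, ∑ k : Fin 2, (∫ X, ‖PkN ℏ ε j k φ X‖ ^ 2 : ℝ) : ℝ) : ℂ)).re
      = 1/2 * (∑ j : Fin N, ∑ k : Fin 2, (∫ X, ‖PkN ℏ ε j k φ X‖ ^ 2 : ℝ)) from by
    simp [Complex.ofReal_re]]
  exact mul_nonneg (by norm_num)
    (Finset.sum_nonneg fun j _ => Finset.sum_nonneg fun k _ =>
      integral_nonneg fun X => sq_nonneg _)

lemma W_pairing (ℏ ε : ℝ) (hφ : ContDiff ℝ (⊤ : ℕ∞) φ) (hs : HasCompactSupport φ) :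
    ∫ X : Fin N → E2, (∑ j, ‖X j‖ ^ 2) * ‖φ X‖ ^ 2
      ≤ 2 * ∫ X, ‖φ X‖ * ‖KKopN ℏ ε φ X‖ := by
  have hφ2cs : HasCompactSupport (fun X : Fin N → E2 => ‖φ X‖ ^ 2) :=
    hs.comp_left (g := fun z : ℂ => ‖z‖ ^ 2) (by simp)
  have iW : Integrable (fun X : Fin N → E2 => (∑ j, ‖X j‖ ^ 2) * ‖φ X‖ ^ 2) :=
    (Continuous.integrable_of_hasCompactSupport
      (contW.mul (hφ.continuous.norm.pow 2)) hφ2cs.mul_left)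
  have iK : Integrable (fun X => (starRingEnd ℂ) (φ X) * KopN ℏ ε φ X) :=
    integrable_cc ((Complex.continuous_conj.comp hφ.continuous).mul (KopN_contDiff ℏ ε hφ))
      (HasCompactSupport.mul_left (KopN_hcs ℏ ε hs))
  have iKK : Integrable (fun X => (starRingEnd ℂ) (φ X) * KKopN ℏ ε φ X) :=
    integrable_cc ((Complex.continuous_conj.comp hφ.continuous).mul (KKopN_cont ℏ ε hφ))
      (HasCompactSupport.mul_left (KKopN_hcs ℏ ε hs))
  have e : ∀ X, (starRingEnd ℂ) (φ X) * KKopN ℏ ε φ X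
      = (starRingEnd ℂ) (φ X) * KopN ℏ ε φ X
        + (((1/2 * ((∑ j, ‖X j‖ ^ 2) * ‖φ X‖ ^ 2)) : ℝ) : ℂ) := by
    intro X
    rw [KKopN, mul_add]
    congr 1
    rw [show (starRingEnd ℂ) (φ X) * ((1/2 : ℂ) * ((∑ j : Fin N, ‖X j‖ ^ 2 : ℝ) : ℂ) * φ X)
        = (1/2 : ℂ) * ((∑ j : Fin N, ‖X j‖ ^ 2 : ℝ) : ℂ) * ((starRingEnd ℂ) (φ X) * φ X)
      from by ring, conj_mul_self]
    push_cast
    ring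
  have split : (∫ X, (starRingEnd ℂ) (φ X) * KKopN ℏ ε φ X)
      = (∫ X, (starRingEnd ℂ) (φ X) * KopN ℏ ε φ X)
        + ((1/2 * ∫ X : Fin N → E2, (∑ j, ‖X j‖ ^ 2) * ‖φ X‖ ^ 2 : ℝ) : ℂ) := by
    have hg2 : Integrable (fun X : Fin N → E2 =>
        (((1/2 * ((∑ j, ‖X j‖ ^ 2) * ‖φ X‖ ^ 2)) : ℝ) : ℂ)) volume :=
      (iW.const_mul (1/2)).ofReal
    simp only [e]
    rw [integral_add iK hg2]
    congr 1
    rw [show (∫ X : Fin N → E2, (((1/2 * ((∑ j, ‖X j‖ ^ 2) * ‖φ X‖ ^ 2)) : ℝ) : ℂ))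
        = (((∫ X : Fin N → E2, 1/2 * ((∑ j, ‖X j‖ ^ 2) * ‖φ X‖ ^ 2)) : ℝ) : ℂ)
      from integral_ofReal]
    norm_cast
    exact MeasureTheory.integral_const_mul _ _
  have hre : (∫ X, (starRingEnd ℂ) (φ X) * KKopN ℏ ε φ X).re
      ≤ ∫ X, ‖φ X‖ * ‖KKopN ℏ ε φ X‖ := by
    refine le_trans (Complex.re_le_norm _) ?_
    refine le_trans (norm_integral_le_integral_norm _) (le_of_eq ?_)
    congr 1
    ext X
    rw [norm_mul, RCLike.norm_conj]
  have hK0 := Kop_pairing_nonneg ℏ ε hφ hs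
  have : (∫ X, (starRingEnd ℂ) (φ X) * KKopN ℏ ε φ X).re
      = (∫ X, (starRingEnd ℂ) (φ X) * KopN ℏ ε φ X).re
        + 1/2 * ∫ X : Fin N → E2, (∑ j, ‖X j‖ ^ 2) * ‖φ X‖ ^ 2 := by
    rw [split, Complex.add_re, Complex.ofReal_re]
  linarith

lemma Vplus_nonneg (x : E2) : 0 ≤ Vplus x := by
  unfold Vplus; split_ifs with h
  · exact Real.log_nonneg h
  · exact le_rfl

lemma Vplus_le_norm (x : E2) : Vplus x ≤ ‖x‖ := by
  unfold Vplus; split_ifs with h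
  · exact Real.log_le_self (norm_nonneg x)
  · exact norm_nonneg x

lemma M_bound (hε : 0 < ε') (hN : 2 ≤ N) (X : Fin N → E2) :
    ((1 / ((N : ℝ) * ε')) * ∑ p : Fin N, ∑ q ∈ Finset.univ.filter (fun q => p < q),
        Vplus (X p - X q)) ^ 2
      ≤ (4 * ((N : ℝ) - 1) ^ 2 / ((N : ℝ) * ε' ^ 2)) * ∑ j, ‖X j‖ ^ 2 := by
  have hNr : (2 : ℝ) ≤ (N : ℝ) := by exact_mod_cast hN
  have hN0 : (0 : ℝ) < (N : ℝ) := by linarith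
  set S := ∑ j, ‖X j‖ with hS
  set W := ∑ j, ‖X j‖ ^ 2 with hW
  set T := ∑ p : Fin N, ∑ q ∈ Finset.univ.filter (fun q => p < q), Vplus (X p - X q) with hT
  have hT0 : 0 ≤ T :=
    Finset.sum_nonneg fun p _ => Finset.sum_nonneg fun q _ => Vplus_nonneg _
  have hS0 : 0 ≤ S := Finset.sum_nonneg fun j _ => norm_nonneg _
  have hTle : T ≤ 2 * ((N : ℝ) - 1) * S := by
    have perp : ∀ p : Fin N, ∑ q ∈ Finset.univ.filter (fun q => p < q), Vplus (X p - X q)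
        ≤ ((N : ℝ) - 2) * ‖X p‖ + S := by
      intro p
      have h1 : ∑ q ∈ Finset.univ.filter (fun q => p < q), Vplus (X p - X q)
          ≤ ∑ q ∈ Finset.univ.filter (fun q => p < q), (‖X p‖ + ‖X q‖) :=
        Finset.sum_le_sum fun q _ =>
          le_trans (Vplus_le_norm _) (norm_sub_le _ _)
      have h2 : ∑ q ∈ Finset.univ.filter (fun q => p < q), (‖X p‖ + ‖X q‖)
          ≤ ∑ q ∈ Finset.univ.erase p, (‖X p‖ + ‖X q‖) := by
        refine Finset.sum_le_sum_of_subset_of_nonneg ?_ (fun q _ _ => by positivity)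
        intro q hq
        simp only [Finset.mem_filter, Finset.mem_univ, true_and] at hq
        exact Finset.mem_erase.2 ⟨(ne_of_gt hq), Finset.mem_univ q⟩
      have h3 : ∑ q ∈ Finset.univ.erase p, (‖X p‖ + ‖X q‖)
          = ((N : ℝ) - 1) * ‖X p‖ + (S - ‖X p‖) := by
        rw [Finset.sum_add_distrib, Finset.sum_const, Finset.card_erase_of_mem (Finset.mem_univ p),
          Finset.sum_erase_eq_sub (Finset.mem_univ p), ← hS]
        simp only [Finset.card_univ, Fintype.card_fin, nsmul_eq_mul]
        have : ((N - 1 : ℕ) : ℝ) = (N : ℝ) - 1 := by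
          have : 1 ≤ N := by omega
          push_cast [Nat.cast_sub this]; ring
        rw [this]
      calc _ ≤ _ := h1
        _ ≤ _ := h2
        _ = _ := h3
        _ ≤ ((N : ℝ) - 2) * ‖X p‖ + S := by ring_nf; exact le_rfl
    calc T ≤ ∑ p : Fin N, (((N : ℝ) - 2) * ‖X p‖ + S) := Finset.sum_le_sum fun p _ => perp p
      _ = ((N : ℝ) - 2) * S + (N : ℝ) * S := by
          rw [Finset.sum_add_distrib, ← Finset.mul_sum, Finset.sum_const]
          simp [Finset.card_univ, nsmul_eq_mul, hS]
      _ = 2 * ((N : ℝ) - 1) * S := by ring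
  have hS2 : S ^ 2 ≤ (N : ℝ) * W := by
    have := sq_sum_le_card_mul_sum_sq (s := (Finset.univ : Finset (Fin N)))
      (f := fun j => ‖X j‖)
    simpa [Finset.card_univ] using this
  have hT2 : T ^ 2 ≤ 4 * ((N : ℝ) - 1) ^ 2 * ((N : ℝ) * W) := by
    have h1 : T ^ 2 ≤ (2 * ((N : ℝ) - 1) * S) ^ 2 := by
      apply pow_le_pow_left₀ hT0 hTle
    nlinarith [sq_nonneg ((N:ℝ) - 1)]
  have key : ((1 / ((N : ℝ) * ε')) * T) ^ 2 = T ^ 2 / ((N:ℝ)^2 * ε'^2) := by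
    field_simp
  rw [key]
  rw [div_le_iff₀ (by positivity)]
  have expand : (4 * ((N : ℝ) - 1) ^ 2 / ((N : ℝ) * ε' ^ 2)) * W * ((N:ℝ)^2 * ε'^2)
      = 4 * ((N : ℝ) - 1) ^ 2 * ((N : ℝ) * W) := by
    field_simp
  rw [expand]
  exact hT2


/-- Step 1 of Lemma 6.9: relative bound for the positive part of the
interaction potential. -/
theorem Vplus_relative_bound (ℏ ε : ℝ) (hℏ : 0 < ℏ) (hε : 0 < ε)
    (N : ℕ) (hN : 2 ≤ N) (a : ℝ) (ha : 0 < a)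
    (φ : (Fin N → E2) → ℂ) (hφ : ContDiff ℝ (⊤ : ℕ∞) φ) (hsupp : HasCompactSupport φ) :
    L2sqN (fun X : Fin N → E2 =>
        (((1 / ((N : ℝ) * ε)) *
            ∑ p : Fin N, ∑ q ∈ Finset.univ.filter (fun q => p < q),
              Vplus (X p - X q) : ℝ) : ℂ) * φ X)
      ≤ (a / 4) * L2sqN (KKopN ℏ ε φ)
        + (64 * ((N : ℝ) - 1) ^ 2 / (a * ε ^ 4)) * L2sqN φ := by
  have hNr : (2 : ℝ) ≤ (N : ℝ) := by exact_mod_cast hN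
  have hN0 : (0 : ℝ) < (N : ℝ) := by linarith
  set C : ℝ := 4 * ((N : ℝ) - 1) ^ 2 / ((N : ℝ) * ε ^ 2) with hCdef
  have hC : 0 < C := by
    apply div_pos
    · nlinarith
    · positivity
  set s : ℝ := 4 * C / a with hsdef
  have hs0 : 0 < s := by positivity
  -- integrability facts
  have hφ2cs : HasCompactSupport (fun X : Fin N → E2 => ‖φ X‖ ^ 2) :=
    hsupp.comp_left (g := fun z : ℂ => ‖z‖ ^ 2) (by simp)
  have iφ2 : Integrable (fun X : Fin N → E2 => ‖φ X‖ ^ 2) :=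
    Continuous.integrable_of_hasCompactSupport (hφ.continuous.norm.pow 2) hφ2cs
  have iKK2 : Integrable (fun X : Fin N → E2 => ‖KKopN ℏ ε φ X‖ ^ 2) :=
    Continuous.integrable_of_hasCompactSupport ((KKopN_cont ℏ ε hφ).norm.pow 2)
      ((KKopN_hcs ℏ ε hsupp).comp_left (g := fun z : ℂ => ‖z‖ ^ 2) (by simp))
  have iW : Integrable (fun X : Fin N → E2 => (∑ j, ‖X j‖ ^ 2) * ‖φ X‖ ^ 2) :=
    Continuous.integrable_of_hasCompactSupport
      (contW.mul (hφ.continuous.norm.pow 2)) hφ2cs.mul_left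
  -- step 1 : pointwise bound and comparison
  have step1 : L2sqN (fun X : Fin N → E2 =>
        (((1 / ((N : ℝ) * ε)) *
            ∑ p : Fin N, ∑ q ∈ Finset.univ.filter (fun q => p < q),
              Vplus (X p - X q) : ℝ) : ℂ) * φ X)
      ≤ C * ∫ X : Fin N → E2, (∑ j, ‖X j‖ ^ 2) * ‖φ X‖ ^ 2 := by
    rw [L2sqN, ← MeasureTheory.integral_const_mul]
    refine integral_mono_of_nonneg (ae_of_all _ fun X => by positivity)
      (iW.const_mul C) (ae_of_all _ fun X => ?_)
    dsimp only
    have hnorm : ‖(((1 / ((N : ℝ) * ε)) *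
            ∑ p : Fin N, ∑ q ∈ Finset.univ.filter (fun q => p < q),
              Vplus ((X : Fin N → E2) p - X q) : ℝ) : ℂ) * φ X‖ ^ 2
        = ((1 / ((N : ℝ) * ε)) *
            ∑ p : Fin N, ∑ q ∈ Finset.univ.filter (fun q => p < q),
              Vplus (X p - X q)) ^ 2 * ‖φ X‖ ^ 2 := by
      rw [norm_mul, Complex.norm_real, mul_pow, Real.norm_eq_abs, sq_abs]
    rw [hnorm]
    calc _ ≤ ((4 * ((N : ℝ) - 1) ^ 2 / ((N : ℝ) * ε ^ 2)) * ∑ j, ‖X j‖ ^ 2) * ‖φ X‖ ^ 2 :=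
          mul_le_mul_of_nonneg_right (M_bound hε hN X) (by positivity)
      _ = C * ((∑ j, ‖X j‖ ^ 2) * ‖φ X‖ ^ 2) := by rw [hCdef]; ring
  -- step 2
  have step2 := W_pairing (φ := φ) ℏ ε hφ hsupp
  -- step 3
  have step3 : ∫ X : Fin N → E2, ‖φ X‖ * ‖KKopN ℏ ε φ X‖
      ≤ (s / 2) * L2sqN φ + (1 / (2 * s)) * L2sqN (KKopN ℏ ε φ) := by
    rw [L2sqN, L2sqN, ← MeasureTheory.integral_const_mul, ← MeasureTheory.integral_const_mul,
      ← integral_add (iφ2.const_mul _) (iKK2.const_mul _)]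
    refine integral_mono_of_nonneg (ae_of_all _ fun X => by positivity)
      ((iφ2.const_mul _).add (iKK2.const_mul _)) (ae_of_all _ fun X => ?_)
    have h := sq_nonneg (s * ‖φ X‖ - ‖KKopN ℏ ε φ X‖)
    rw [← sub_nonneg]
    have e : s / 2 * ‖φ X‖ ^ 2 + 1 / (2 * s) * ‖KKopN ℏ ε φ X‖ ^ 2
        - ‖φ X‖ * ‖KKopN ℏ ε φ X‖
        = (s * ‖φ X‖ - ‖KKopN ℏ ε φ X‖) ^ 2 / (2 * s) := by
      field_simp; ring
    rw [e]; positivity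
  -- nonnegativity of L2 norms
  have hP : 0 ≤ L2sqN φ := integral_nonneg fun X => sq_nonneg _
  have hQ : 0 ≤ L2sqN (KKopN ℏ ε φ) := integral_nonneg fun X => sq_nonneg _
  -- combine
  have hcomb : L2sqN (fun X : Fin N → E2 =>
        (((1 / ((N : ℝ) * ε)) *
            ∑ p : Fin N, ∑ q ∈ Finset.univ.filter (fun q => p < q),
              Vplus (X p - X q) : ℝ) : ℂ) * φ X)
      ≤ C * (2 * ((s / 2) * L2sqN φ + (1 / (2 * s)) * L2sqN (KKopN ℏ ε φ))) := by
    refine le_trans step1 ?_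
    refine le_trans (mul_le_mul_of_nonneg_left step2 hC.le) ?_
    exact mul_le_mul_of_nonneg_left (by linarith [step3]) hC.le
  refine le_trans hcomb ?_
  have e1 : C * (2 * ((s / 2) * L2sqN φ + (1 / (2 * s)) * L2sqN (KKopN ℏ ε φ)))
      = (C / s) * L2sqN (KKopN ℏ ε φ) + (C * s) * L2sqN φ := by
    field_simp; ring
  rw [e1]
  have hCs : C / s = a / 4 := by
    rw [hsdef]; field_simp
  have hCe : C * ε ^ 2 ≤ 4 * ((N : ℝ) - 1) := by
    rw [hCdef, div_mul_eq_mul_div, div_le_iff₀ (by positivity)]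
    nlinarith [mul_pos hε hε]
  have hCsle : C * s ≤ 64 * ((N : ℝ) - 1) ^ 2 / (a * ε ^ 4) := by
    have e2 : C * s = 4 * C * C / a := by rw [hsdef]; ring
    rw [e2, div_le_div_iff₀ (by positivity) (by positivity)]
    have hsq := mul_le_mul hCe hCe (mul_nonneg hC.le (sq_nonneg ε)) (by linarith)
    nlinarith [mul_le_mul_of_nonneg_left hsq (by positivity : (0:ℝ) ≤ 4 * a)]
  rw [hCs]
  have := mul_le_mul_of_nonneg_right hCsle hP
  linarith
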